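/- arXiv:2506.14859 — 2 statements merged into one kernel-verified Lean document; each statement's English description precedes it below -/
import Mathlib

section
/- In the two-colour unfair Pólya urn with replacement numbers m_b ≥ m_w ≥ 1, starting from b_0 black and w_0 white balls with b_0 > w_0 ≥ 0 and b_0 ≥ 1, the probability that B_n > W_n for all n ≥ 0 is strictly positive. -/
/-!
When `mw ≤ mb`, the white fraction `W n / (B n + W n)` is a supermartingale: a black draw
dilutes the white balls by `mb`, more than a white draw can enrich them by `mw`. It is
nonnegative and starts below `1 / 2`, so stopping it when it first reaches `1 / 2` (Ville's
maximal inequality) bounds the probability that `B n ≤ W n` for some `n` by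
`2 w0 / (b0 + w0) < 1`.
-/

open MeasureTheory ProbabilityTheory Filter Real

/-- A two-colour unfair Pólya urn: `B n`, `W n` are the numbers of black and white balls
after `n` draws.  At each step a ball is drawn uniformly at random; if it is black,
`mb` black balls are added, and if it is white, `mw` white balls are added.
The uniform drawing rule is encoded by the conditional probability (given the natural
filtration of the process) of a black draw being `B n / (B n + W n)`. -/
structure PolyaUrn (Ω : Type*) [MeasurableSpace Ω] where
  μ : Measure Ω
  isProb : IsProbabilityMeasure μ
  mb : ℕ
  mw : ℕ
  mb_pos : 0 < mb
  mw_pos : 0 < mw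
  B : ℕ → Ω → ℕ
  W : ℕ → Ω → ℕ
  measB : ∀ n, Measurable (B n)
  measW : ∀ n, Measurable (W n)
  /-- each step either adds `mb` black balls (black draw) or `mw` white balls (white draw) -/
  step : ∀ n ω, (B (n+1) ω = B n ω + mb ∧ W (n+1) ω = W n ω) ∨
                (B (n+1) ω = B n ω ∧ W (n+1) ω = W n ω + mw)
  /-- the natural filtration generated by the process `(B, W)` -/
  𝓕 : Filtration ℕ ‹MeasurableSpace Ω›
  h𝓕 : ∀ n, 𝓕 n = ⨆ i ∈ Set.Iic n, MeasurableSpace.comap (fun ω => (B i ω, W i ω)) inferInstance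
  /-- conditionally on the past, a black ball is drawn at step `n`
  with probability `B n / (B n + W n)` -/
  hcond : ∀ n, (μ[(fun ω => if B (n+1) ω = B n ω + mb then (1:ℝ) else 0) | 𝓕 n])
      =ᵐ[μ] fun ω => (B n ω : ℝ) / ((B n ω : ℝ) + (W n ω : ℝ))

namespace MeasureTheory

variable {Ω : Type*} {m m0 : MeasurableSpace Ω} {μ : Measure Ω}

theorem condExp_mul_add_one_sub_mul_ae_eq [IsFiniteMeasure μ] (hm : m ≤ m0) {I x y : Ω → ℝ}
    {C : ℝ} (hI : Integrable I μ) (hx : StronglyMeasurable[m] x) (hy : StronglyMeasurable[m] y)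
    (hxC : ∀ ω, ‖x ω‖ ≤ C) (hyC : ∀ ω, ‖y ω‖ ≤ C) :
    μ[I * x + (1 - I) * y | m] =ᵐ[μ] μ[I | m] * x + (1 - μ[I | m]) * y := by
  have hxy : StronglyMeasurable[m] (x - y) := hx.sub hy
  have hIxy : Integrable (I * (x - y)) μ :=
    hI.mul_bdd (hxy.mono hm).aestronglyMeasurable
      (ae_of_all _ fun ω => (norm_sub_le _ _).trans (add_le_add (hxC ω) (hyC ω)))
  have hyint : Integrable y μ :=
    (integrable_const C).mono' (hy.mono hm).aestronglyMeasurable (ae_of_all _ hyC)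
  have hsplit : I * x + (1 - I) * y = I * (x - y) + y := by ring
  rw [hsplit]
  filter_upwards [condExp_add hIxy hyint m,
    condExp_mul_of_stronglyMeasurable_right hxy hIxy hI] with ω hadd hmul
  rw [hadd, Pi.add_apply, hmul, condExp_of_stronglyMeasurable hm hy hyint]
  simp only [Pi.mul_apply, Pi.sub_apply, Pi.add_apply, Pi.one_apply]
  ring

variable {𝒢 : Filtration ℕ m0} {f : ℕ → Ω → ℝ}

theorem Supermartingale.maximal_ineq_le [IsFiniteMeasure μ] (hf : Supermartingale f 𝒢 μ)
    (hnonneg : 0 ≤ f) (ε : ℝ) (n : ℕ) :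
    ε * μ.real {ω | ∃ k ≤ n, ε ≤ f k ω} ≤ μ[f 0] := by
  set τ : Ω → ℕ∞ := fun ω => (hittingBtwn f (Set.Ici ε) 0 n ω : ℕ)
  have hτ : IsStoppingTime 𝒢 τ :=
    hf.stronglyAdapted.adapted.isStoppingTime_hittingBtwn measurableSet_Ici
  have hτn : ∀ ω, τ ω ≤ n := fun ω => WithTop.coe_le_coe.2 (hittingBtwn_le ω)
  have hneg : stoppedValue (-f) τ = -stoppedValue f τ := rfl
  have hint : Integrable (stoppedValue f τ) μ :=
    integrable_neg_iff.1 (hneg ▸ hf.neg.integrable_stoppedValue hτ hτn)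
  have hmeas : ∀ k, Measurable (f k) := fun k =>
    (hf.stronglyAdapted k).measurable.mono (𝒢.le k) le_rfl
  have hS : MeasurableSet {ω | ∃ k ≤ n, ε ≤ f k ω} := by
    simp only [Set.ofPred_exists, Set.ofPred_and]
    exact .iUnion fun k =>
      (MeasurableSet.const _).inter (measurableSet_le measurable_const (hmeas k))
  have hopt : μ[stoppedValue f τ] ≤ μ[f 0] := by
    have := hf.neg.expected_stoppedValue_mono (isStoppingTime_const 𝒢 0) hτ
      (fun ω => zero_le) hτn
    rw [stoppedValue_const, hneg, integral_neg'] at this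
    simp only [Pi.neg_apply, integral_neg] at this
    linarith
  calc ε * μ.real {ω | ∃ k ≤ n, ε ≤ f k ω}
      ≤ ∫ ω in {ω | ∃ k ≤ n, ε ≤ f k ω}, stoppedValue f τ ω ∂μ :=
        setIntegral_ge_of_const_le_real hS (measure_ne_top _ _)
          (fun ω ⟨k, hk, hεk⟩ => stoppedValue_hittingBtwn_mem ⟨k, ⟨zero_le, hk⟩, hεk⟩)
          hint.integrableOn
    _ ≤ μ[stoppedValue f τ] := setIntegral_le_integral hint (ae_of_all _ fun ω => hnonneg _ _)
    _ ≤ μ[f 0] := hopt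

theorem Supermartingale.maximal_ineq [IsFiniteMeasure μ] (hf : Supermartingale f 𝒢 μ)
    (hnonneg : 0 ≤ f) (ε : ℝ) :
    ε * μ.real {ω | ∃ k, ε ≤ f k ω} ≤ μ[f 0] := by
  have hmono : Monotone fun n => {ω | ∃ k ≤ n, ε ≤ f k ω} :=
    fun i j hij ω ⟨k, hk, hεk⟩ => ⟨k, hk.trans hij, hεk⟩
  have hunion : ⋃ n, {ω | ∃ k ≤ n, ε ≤ f k ω} = {ω | ∃ k, ε ≤ f k ω} := by
    ext ω
    simp only [Set.mem_iUnion, Set.mem_ofPred_eq]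
    exact ⟨fun ⟨_, k, _, h⟩ => ⟨k, h⟩, fun ⟨k, h⟩ => ⟨k, k, le_rfl, h⟩⟩
  have hlim := (ENNReal.tendsto_toReal (measure_ne_top μ _)).comp
    (tendsto_measure_iUnion_atTop (μ := μ) hmono)
  rw [hunion] at hlim
  exact le_of_tendsto' (hlim.const_mul ε) fun n => hf.maximal_ineq_le hnonneg ε n

end MeasureTheory

noncomputable def whiteFraction (b w : ℕ) : ℝ := w / (b + w)

theorem whiteFraction_nonneg (b w : ℕ) : 0 ≤ whiteFraction b w := by
  unfold whiteFraction; positivity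

theorem whiteFraction_le_one (b w : ℕ) : whiteFraction b w ≤ 1 :=
  div_le_one_of_le₀ (le_add_of_nonneg_left (Nat.cast_nonneg b)) (by positivity)

theorem whiteFraction_lt_half {b w : ℕ} (h : w < b) : whiteFraction b w < 1 / 2 := by
  have h' : (w : ℝ) < b := mod_cast h
  have hw : (0 : ℝ) ≤ w := Nat.cast_nonneg w
  rw [whiteFraction, div_lt_iff₀ (by linarith)]
  linarith

theorem half_le_whiteFraction {b w : ℕ} (h : b ≤ w) (hw : 0 < w) : 1 / 2 ≤ whiteFraction b w := by
  have h' : (b : ℝ) ≤ w := mod_cast h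
  have hw' : (0 : ℝ) < w := mod_cast hw
  rw [whiteFraction, le_div_iff₀ (by positivity)]
  linarith

/-- A black draw has probability `b / (b + w)`: the left side is the expected white fraction
after one draw. -/
theorem whiteFraction_drift {b w mb mw : ℕ} (hb : 0 < b) (hm : mw ≤ mb) :
    (b / (b + w) : ℝ) * whiteFraction (b + mb) w + (1 - b / (b + w)) * whiteFraction b (w + mw)
      ≤ whiteFraction b w := by
  have hb' : (0 : ℝ) < b := mod_cast hb
  have hw : (0 : ℝ) ≤ w := Nat.cast_nonneg w
  have hs : (0 : ℝ) < b + w := by positivity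
  have hblack : 1 - b / (b + w) = (w / (b + w) : ℝ) := by field_simp; ring
  have hsum : (b : ℝ) * whiteFraction (b + mw) w + w * whiteFraction b (w + mw) = w := by
    simp only [whiteFraction, Nat.cast_add]
    field_simp
    ring
  calc (b / (b + w) : ℝ) * whiteFraction (b + mb) w + (1 - b / (b + w)) * whiteFraction b (w + mw)
      = (b * whiteFraction (b + mb) w + w * whiteFraction b (w + mw)) / (b + w) := by
        rw [hblack]; ring
    _ ≤ (b * whiteFraction (b + mw) w + w * whiteFraction b (w + mw)) / (b + w) := by
        unfold whiteFraction; gcongr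
    _ = whiteFraction b w := by rw [hsum, whiteFraction]

namespace PolyaUrn

variable {Ω : Type*} [MeasurableSpace Ω] (U : PolyaUrn Ω)

theorem B_mono (ω : Ω) : Monotone fun n => U.B n ω :=
  monotone_nat_of_le_succ fun n => by rcases U.step n ω with ⟨h, _⟩ | ⟨h, _⟩ <;> omega

theorem measurable_state (n : ℕ) : Measurable[U.𝓕 n] fun ω => (U.B n ω, U.W n ω) := by
  refine measurable_iff_comap_le.2 ?_
  rw [U.h𝓕 n]
  exact le_iSup₂ (f := fun i (_ : i ∈ Set.Iic n) =>
    MeasurableSpace.comap (fun ω => (U.B i ω, U.W i ω)) inferInstance) n Set.self_mem_Iic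

theorem stronglyMeasurable_comp_state (n : ℕ) (g : ℕ × ℕ → ℝ) :
    StronglyMeasurable[U.𝓕 n] fun ω => g (U.B n ω, U.W n ω) :=
  ((measurable_of_countable g).comp (U.measurable_state n)).stronglyMeasurable

noncomputable def blackDraw (n : ℕ) (ω : Ω) : ℝ := if U.B (n + 1) ω = U.B n ω + U.mb then 1 else 0

noncomputable def whiteProportion (n : ℕ) (ω : Ω) : ℝ := whiteFraction (U.B n ω) (U.W n ω)

theorem whiteProportion_nonneg : 0 ≤ U.whiteProportion := fun _ _ => whiteFraction_nonneg _ _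

theorem whiteProportion_succ (n : ℕ) :
    U.whiteProportion (n + 1) =
      U.blackDraw n * (fun ω => whiteFraction (U.B n ω + U.mb) (U.W n ω)) +
        (1 - U.blackDraw n) * fun ω => whiteFraction (U.B n ω) (U.W n ω + U.mw) := by
  funext ω
  have := U.mb_pos
  rcases U.step n ω with ⟨hB, hW⟩ | ⟨hB, hW⟩ <;>
    simp [whiteProportion, blackDraw, hB, hW, this.ne']

theorem integrable_blackDraw (n : ℕ) : Integrable (U.blackDraw n) U.μ := by
  have := U.isProb
  refine (integrable_const 1).mono' ?_ (ae_of_all _ fun ω => ?_)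
  · exact (Measurable.ite (measurableSet_eq_fun (U.measB (n + 1))
      ((U.measB n).add measurable_const)) measurable_const measurable_const).aestronglyMeasurable
  · unfold blackDraw; split_ifs <;> simp

theorem supermartingale_whiteProportion (hm : U.mw ≤ U.mb) (hB : ∀ n ω, 0 < U.B n ω) :
    Supermartingale U.whiteProportion U.𝓕 U.μ := by
  have := U.isProb
  have hadapted : StronglyAdapted U.𝓕 U.whiteProportion := fun n =>
    U.stronglyMeasurable_comp_state n fun p => whiteFraction p.1 p.2
  have hbound : ∀ b w, ‖whiteFraction b w‖ ≤ 1 := fun b w => by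
    rw [Real.norm_of_nonneg (whiteFraction_nonneg b w)]; exact whiteFraction_le_one b w
  refine supermartingale_nat hadapted (fun n => (integrable_const 1).mono'
    ((hadapted n).mono (U.𝓕.le n)).aestronglyMeasurable (ae_of_all _ fun ω => hbound _ _))
    fun n => ?_
  rw [U.whiteProportion_succ n]
  filter_upwards [condExp_mul_add_one_sub_mul_ae_eq (U.𝓕.le n) (U.integrable_blackDraw n)
    (U.stronglyMeasurable_comp_state n fun p => whiteFraction (p.1 + U.mb) p.2)
    (U.stronglyMeasurable_comp_state n fun p => whiteFraction p.1 (p.2 + U.mw))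
    (fun ω => hbound _ _) (fun ω => hbound _ _), U.hcond n] with ω hstep hblack
  rw [hstep]
  simp only [Pi.add_apply, Pi.mul_apply, Pi.sub_apply, Pi.one_apply]
  rw [show U.μ[U.blackDraw n | U.𝓕 n] ω = _ from hblack]
  exact whiteFraction_drift (hB n ω) hm

end PolyaUrn

theorem stmt0_general {Ω : Type*} [MeasurableSpace Ω] (U : PolyaUrn Ω) (b0 w0 : ℕ)
    (hm : U.mw ≤ U.mb) (hbw : w0 < b0)
    (hB0 : ∀ ω, U.B 0 ω = b0) (hW0 : ∀ ω, U.W 0 ω = w0) :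
    0 < U.μ {ω | ∀ n, U.W n ω < U.B n ω} := by
  have := U.isProb
  set G := {ω | ∀ n, U.W n ω < U.B n ω}
  have hBpos : ∀ n ω, 0 < U.B n ω := fun n ω =>
    (hB0 ω ▸ Nat.zero_lt_of_lt hbw).trans_le (U.B_mono ω (Nat.zero_le n))
  have hM0 : U.μ[U.whiteProportion 0] = whiteFraction b0 w0 := by
    simp [PolyaUrn.whiteProportion, hB0, hW0]
  set H := {ω | ∃ k, 1 / 2 ≤ U.whiteProportion k ω}
  have hGc : Gᶜ ⊆ H := fun ω hω => by
    obtain ⟨k, hk⟩ := not_forall.1 hω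
    exact ⟨k, half_le_whiteFraction (not_lt.1 hk) ((hBpos k ω).trans_le (not_lt.1 hk))⟩
  have hville : 1 / 2 * U.μ.real H ≤ whiteFraction b0 w0 :=
    hM0 ▸ (U.supermartingale_whiteProportion hm hBpos).maximal_ineq
      U.whiteProportion_nonneg (1 / 2)
  have hGc_lt : U.μ.real Gᶜ < 1 := calc
    U.μ.real Gᶜ ≤ U.μ.real H := measureReal_mono hGc
    _ ≤ 2 * whiteFraction b0 w0 := by linarith
    _ < 1 := by linarith [whiteFraction_lt_half hbw]
  have hcover : 1 ≤ U.μ.real G + U.μ.real Gᶜ := by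
    simpa [Set.union_compl_self] using measureReal_union_le (μ := U.μ) G Gᶜ
  exact (ENNReal.toReal_pos_iff.1 (by linarith : 0 < U.μ.real G)).1

/-- In the two-colour unfair Pólya urn with `mb ≥ mw ≥ 1`, starting from `b0` black and
`w0` white balls with `b0 > w0 ≥ 0` and `b0 ≥ 1`, the probability that `B n > W n`
for all `n ≥ 0` is strictly positive. -/
theorem stmt0 {Ω : Type*} [MeasurableSpace Ω] (U : PolyaUrn Ω) (b0 w0 : ℕ)
    (hm : U.mw ≤ U.mb) (hbw : w0 < b0) (hb : 1 ≤ b0)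
    (hB0 : ∀ ω, U.B 0 ω = b0) (hW0 : ∀ ω, U.W 0 ω = w0) :
    0 < U.μ {ω | ∀ n, U.W n ω < U.B n ω} :=
  stmt0_general U b0 w0 hm hbw hB0 hW0
end

section
/- Consider the q-colour unfair Pólya urn where a draw of colour i adds m_i balls of colour i, with m_1 ≥ m_j for all j ≠ 1. If initially the number of balls of colour 1 exceeds the total number of all other balls (absolute majority), then with positive probability colour 1 holds an absolute majority at every time n ≥ 0. -/
/-!
Let `Y n` be the fraction of balls not of colour `c`, i.e. `S / T` with `S` the minority count
and `T` the total. A draw of colour `i ≠ c` moves it to `(S + m i) / (T + m i)`, a draw of `c` to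
`S / (T + m c)`. As `S ≤ T` and `m i ≤ m c`, these values are at most the ones obtained with every
`m i` replaced by `m c`, for which `Y` would be a martingale; so `Y` is a nonnegative
supermartingale. Optional stopping at the first time `Y ≥ 1/2` gives
`P(∃ n, Y n ≥ 1/2) ≤ 2 E[Y 0] < 1`, and `c` holds an absolute majority at time `n` exactly when
`Y n < 1/2`.
-/

open MeasureTheory ProbabilityTheory Filter Real

/-- A `q`-colour unfair Pólya urn: `X n i` is the number of balls of colour `i` after `n`
draws. At each step a ball is drawn uniformly at random; a draw of colour `i` adds `m i`
balls of colour `i`. The uniform drawing rule is encoded by the conditional probability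
(given the natural filtration) of drawing colour `i` being `X n i / ∑ j, X n j`. -/
structure PolyaUrnQ (q : ℕ) (Ω : Type*) [MeasurableSpace Ω] where
  μ : Measure Ω
  isProb : IsProbabilityMeasure μ
  m : Fin q → ℕ
  m_pos : ∀ i, 0 < m i
  X : ℕ → Fin q → Ω → ℕ
  measX : ∀ n i, Measurable (X n i)
  /-- at each step, some colour `i` is drawn and `m i` balls of colour `i` are added -/
  step : ∀ n ω, ∃ i : Fin q, ∀ j : Fin q,
      X (n+1) j ω = X n j ω + (if j = i then m i else 0)
  /-- the natural filtration generated by the process `X` -/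
  𝓕 : Filtration ℕ ‹MeasurableSpace Ω›
  h𝓕 : ∀ n, 𝓕 n = ⨆ i ∈ Set.Iic n, MeasurableSpace.comap (fun ω j => X i j ω) inferInstance
  /-- conditionally on the past, colour `i` is drawn at step `n`
  with probability `X n i / ∑ j, X n j` -/
  hcond : ∀ n (i : Fin q),
      (μ[(fun ω => if X (n+1) i ω = X n i ω + m i then (1:ℝ) else 0) | 𝓕 n])
        =ᵐ[μ] fun ω => (X n i ω : ℝ) / (∑ j : Fin q, (X n j ω : ℝ))

namespace MeasureTheory

variable {Ω : Type*} {m0 : MeasurableSpace Ω} {μ : Measure Ω} {𝒢 : Filtration ℕ m0}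
  {Y : ℕ → Ω → ℝ}

lemma Supermartingale.mul_measureReal_exists_le_le_integral [IsFiniteMeasure μ]
    (hY : Supermartingale Y 𝒢 μ) (hnonneg : 0 ≤ Y) (a : ℝ) (N : ℕ) :
    a * μ.real {ω | ∃ n ≤ N, a ≤ Y n ω} ≤ μ[Y 0] := by
  set τ : Ω → ℕ := hittingBtwn Y (Set.Ici a) 0 N
  have hτ : IsStoppingTime 𝒢 (fun ω ↦ (τ ω : ℕ∞)) :=
    hY.stronglyAdapted.adapted.isStoppingTime_hittingBtwn measurableSet_Ici
  have hτN : ∀ ω, (τ ω : ℕ∞) ≤ N := fun ω ↦ mod_cast hittingBtwn_le (m := N) ω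
  have hτint : Integrable (stoppedValue Y (fun ω ↦ (τ ω : ℕ∞))) μ :=
    integrable_stoppedValue ℕ hτ hY.integrable hτN
  have hmeas : MeasurableSet {ω | ∃ n ≤ N, a ≤ Y n ω} := by
    simp only [Set.ofPred_exists]
    exact MeasurableSet.iUnion fun n ↦ (MeasurableSet.const (n ≤ N)).inter <|
      measurableSet_le measurable_const ((hY.stronglyMeasurable n).measurable.mono (𝒢.le n) le_rfl)
  have hstop : μ[stoppedValue Y (fun ω ↦ (τ ω : ℕ∞))] ≤ μ[Y 0] := by
    have := hY.neg.expected_stoppedValue_mono (isStoppingTime_const 𝒢 0) hτ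
      (fun ω ↦ bot_le) hτN
    simpa [stoppedValue, integral_neg] using this
  calc a * μ.real {ω | ∃ n ≤ N, a ≤ Y n ω}
      ≤ ∫ ω in {ω | ∃ n ≤ N, a ≤ Y n ω}, stoppedValue Y (fun ω ↦ (τ ω : ℕ∞)) ω ∂μ := by
        refine setIntegral_ge_of_const_le_real hmeas (measure_ne_top _ _) (fun ω ⟨n, hn, ha⟩ ↦ ?_)
          hτint.integrableOn
        exact stoppedValue_hittingBtwn_mem ⟨n, ⟨Nat.zero_le n, hn⟩, ha⟩
    _ ≤ μ[stoppedValue Y (fun ω ↦ (τ ω : ℕ∞))] :=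
        setIntegral_le_integral hτint (Filter.Eventually.of_forall fun ω ↦ hnonneg _ _)
    _ ≤ μ[Y 0] := hstop

lemma Supermartingale.measure_forall_lt_pos [IsProbabilityMeasure μ]
    (hY : Supermartingale Y 𝒢 μ) (hnonneg : 0 ≤ Y) {a : ℝ} (ha : μ[Y 0] < a) :
    0 < μ {ω | ∀ n, Y n ω < a} := by
  have ha₀ : 0 < a := (integral_nonneg (hnonneg 0)).trans_lt ha
  set B := {ω | ∃ n, a ≤ Y n ω}
  have hB : μ B ≤ ENNReal.ofReal (μ[Y 0] / a) := by
    have hB_eq : B = ⋃ N, {ω | ∃ n ≤ N, a ≤ Y n ω} := by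
      ext ω
      simp only [B, Set.mem_ofPred_eq, Set.mem_iUnion]
      exact ⟨fun ⟨n, hn⟩ ↦ ⟨n, n, le_rfl, hn⟩, fun ⟨_, n, _, hn⟩ ↦ ⟨n, hn⟩⟩
    have hmono : Monotone fun N ↦ {ω | ∃ n ≤ N, a ≤ Y n ω} :=
      fun M N hMN ω ⟨n, hn, h⟩ ↦ ⟨n, hn.trans hMN, h⟩
    rw [hB_eq, hmono.measure_iUnion]
    refine iSup_le fun N ↦ (ENNReal.le_ofReal_iff_toReal_le (measure_ne_top _ _)
      (div_nonneg (integral_nonneg (hnonneg 0)) ha₀.le)).2 ?_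
    rw [le_div_iff₀ ha₀, mul_comm]
    exact hY.mul_measureReal_exists_le_le_integral hnonneg a N
  have hB_lt : μ B < 1 :=
    hB.trans_lt (ENNReal.ofReal_lt_one.2 ((div_lt_one ha₀).2 ha))
  have hcompl : {ω | ∀ n, Y n ω < a} = Bᶜ := by
    ext ω
    simp [B]
  rw [hcompl, pos_iff_ne_zero]
  intro h0
  have := measure_univ_le_add_compl (μ := μ) B
  rw [measure_univ, h0, add_zero] at this
  exact hB_lt.not_ge this

lemma integral_lt_of_forall_lt [IsProbabilityMeasure μ] {f : Ω → ℝ} (hf : Integrable f μ) {a : ℝ}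
    (h : ∀ ω, f ω < a) : μ[f] < a := by
  have hsupp : Function.support (fun ω ↦ a - f ω) = Set.univ :=
    Set.eq_univ_of_forall fun ω ↦ (sub_pos.2 (h ω)).ne'
  have hpos : 0 < ∫ ω, (a - f ω) ∂μ := by
    rw [integral_pos_iff_support_of_nonneg (fun ω ↦ (sub_pos.2 (h ω)).le)
      ((integrable_const a).sub hf), hsupp, measure_univ]
    exact one_pos
  rw [integral_sub (integrable_const a) hf, integral_const, probReal_univ, one_smul] at hpos
  linarith

end MeasureTheory

section MinorityFraction

open Finset

variable {ι : Type*} [Fintype ι] [DecidableEq ι]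

noncomputable def minorityFraction (x : ι → ℝ) (c : ι) : ℝ :=
  (∑ i ∈ univ.erase c, x i) / ∑ i, x i

variable {x : ι → ℝ} {c : ι}

lemma sum_erase_le_sum (hx : 0 ≤ x) : ∑ i ∈ univ.erase c, x i ≤ ∑ i, x i :=
  sum_le_sum_of_subset_of_nonneg (erase_subset c univ) fun i _ _ ↦ hx i

lemma minorityFraction_nonneg (hx : 0 ≤ x) : 0 ≤ minorityFraction x c :=
  div_nonneg (sum_nonneg fun i _ ↦ hx i) (sum_nonneg fun i _ ↦ hx i)

lemma minorityFraction_le_one (hx : 0 ≤ x) : minorityFraction x c ≤ 1 :=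
  div_le_one_of_le₀ (sum_erase_le_sum hx) (sum_nonneg fun i _ ↦ hx i)

lemma abs_minorityFraction_le_one (hx : 0 ≤ x) : |minorityFraction x c| ≤ 1 :=
  abs_le.2 ⟨by linarith [minorityFraction_nonneg (c := c) hx], minorityFraction_le_one hx⟩

lemma minorityFraction_lt_half_iff (hx : 0 ≤ x) (hc : 0 < x c) :
    minorityFraction x c < 1 / 2 ↔ ∑ i ∈ univ.erase c, x i < x c := by
  have hsum := sum_erase_add univ x (mem_univ c)
  have hS : 0 ≤ ∑ i ∈ univ.erase c, x i := sum_nonneg fun i _ ↦ hx i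
  rw [minorityFraction, div_lt_iff₀ (by linarith), ← hsum]
  constructor <;> intro h <;> linarith

lemma minorityFraction_add_single (i : ι) (r : ℝ) :
    minorityFraction (x + Pi.single i r) c =
      (∑ j ∈ univ.erase c, x j + if i = c then 0 else r) / (∑ j, x j + r) := by
  simp only [minorityFraction, Pi.add_apply, sum_add_distrib, sum_pi_single', mem_univ,
    mem_erase]
  congr 2
  by_cases h : i = c <;> simp [h]

/-- The left side is the expected minority fraction after one draw from an urn with
contents `x`. -/
lemma sum_minorityFraction_add_single_mul_le {m : ι → ℝ} (hx : 0 ≤ x) (hm : 0 ≤ m)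
    (hmc : ∀ i, m i ≤ m c) :
    ∑ i, minorityFraction (x + Pi.single i (m i)) c * (x i / ∑ j, x j) ≤
      minorityFraction x c := by
  set S := ∑ j ∈ univ.erase c, x j
  set T := ∑ j, x j
  rcases (show 0 ≤ T from sum_nonneg fun i _ ↦ hx i).eq_or_lt with hT | hT
  · have h0 : ∀ i, x i / T = 0 := fun i ↦ by rw [← hT, div_zero]
    simp only [h0, mul_zero, sum_const_zero]
    exact minorityFraction_nonneg hx
  have hST : S ≤ T := sum_erase_le_sum hx
  have hS : 0 ≤ S := sum_nonneg fun i _ ↦ hx i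
  have hxc : x c = T - S := by linarith [sum_erase_add univ x (mem_univ c)]
  have hmc0 : 0 ≤ m c := hm c
  have hbound : ∀ i ∈ univ.erase c, minorityFraction (x + Pi.single i (m i)) c ≤
      (S + m c) / (T + m c) := by
    intro i hi
    have hmi : 0 ≤ m i := hm i
    rw [minorityFraction_add_single, if_neg (ne_of_mem_erase hi),
      div_le_div_iff₀ (by positivity) (by positivity)]
    nlinarith [hmc i]
  calc ∑ i, minorityFraction (x + Pi.single i (m i)) c * (x i / T)
      = ∑ i ∈ univ.erase c, minorityFraction (x + Pi.single i (m i)) c * (x i / T)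
          + S / (T + m c) * (x c / T) := by
        rw [← sum_erase_add _ _ (mem_univ c), minorityFraction_add_single, if_pos rfl, add_zero]
    _ ≤ ∑ i ∈ univ.erase c, (S + m c) / (T + m c) * (x i / T) + S / (T + m c) * (x c / T) := by
        gcongr with i hi
        · exact div_nonneg (hx i) hT.le
        · exact hbound i hi
    _ = minorityFraction x c := by
        change _ = S / T
        rw [← mul_sum, ← sum_div, hxc]
        field_simp
        ring

end MinorityFraction

namespace PolyaUrnQ

variable {q : ℕ} {Ω : Type*} [MeasurableSpace Ω] (U : PolyaUrnQ q Ω)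

instance : IsProbabilityMeasure U.μ := U.isProb

def counts (n : ℕ) (ω : Ω) : Fin q → ℝ := fun j ↦ U.X n j ω

noncomputable def drawn (n : ℕ) (i : Fin q) (ω : Ω) : ℝ :=
  if U.X (n+1) i ω = U.X n i ω + U.m i then 1 else 0

noncomputable def minorityProcess (c : Fin q) (n : ℕ) (ω : Ω) : ℝ :=
  minorityFraction (U.counts n ω) c

lemma counts_nonneg (n : ℕ) (ω : Ω) : 0 ≤ U.counts n ω := fun _ ↦ Nat.cast_nonneg _

lemma X_zero_le (n : ℕ) (j : Fin q) (ω : Ω) : U.X 0 j ω ≤ U.X n j ω := by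
  induction n with
  | zero => rfl
  | succ n ih =>
    obtain ⟨i, hi⟩ := U.step n ω
    exact ih.trans (hi j ▸ Nat.le_add_right _ _)

lemma exists_counts_succ (n : ℕ) (ω : Ω) : ∃ i₀, U.counts (n+1) ω =
    U.counts n ω + Pi.single i₀ (U.m i₀ : ℝ) ∧ ∀ i, U.drawn n i ω = if i = i₀ then 1 else 0 := by
  obtain ⟨i₀, hi₀⟩ := U.step n ω
  refine ⟨i₀, funext fun j ↦ ?_, fun i ↦ ?_⟩
  · simp only [counts, hi₀ j, Pi.add_apply, Pi.single_apply]
    split_ifs <;> simp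
  · have := U.m_pos i
    by_cases h : i = i₀
    · subst h; simp [drawn, hi₀ i]
    · simp [drawn, hi₀ i, h]; omega

lemma minorityProcess_succ (c : Fin q) (n : ℕ) (ω : Ω) :
    U.minorityProcess c (n+1) ω =
      ∑ i, minorityFraction (U.counts n ω + Pi.single i (U.m i : ℝ)) c * U.drawn n i ω := by
  obtain ⟨i₀, hcounts, hdrawn⟩ := U.exists_counts_succ n ω
  simp [minorityProcess, hcounts, hdrawn]

lemma measurable_comp_counts {n N : ℕ} (hn : n ≤ N) (h : (Fin q → ℝ) → ℝ) :
    Measurable[U.𝓕 N] fun ω ↦ h (U.counts n ω) := by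
  have hle : MeasurableSpace.comap (fun ω j ↦ U.X n j ω) inferInstance ≤ U.𝓕 N := by
    rw [U.h𝓕 N]
    exact le_biSup (fun i ↦ MeasurableSpace.comap (fun ω j ↦ U.X i j ω) inferInstance)
      (Set.mem_Iic.mpr hn)
  exact (measurable_of_countable fun v : Fin q → ℕ ↦ h fun j ↦ (v j : ℝ)).comp
    (measurable_iff_comap_le.mpr hle)

lemma measurable_drawn (n : ℕ) (i : Fin q) : Measurable (U.drawn n i) :=
  Measurable.ite (measurableSet_eq_fun (U.measX _ _) ((U.measX _ _).add_const _))
    measurable_const measurable_const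

lemma abs_drawn_le_one (n : ℕ) (i : Fin q) (ω : Ω) : |U.drawn n i ω| ≤ 1 := by
  unfold drawn; split_ifs <;> norm_num

lemma stronglyAdapted_minorityProcess (c : Fin q) :
    StronglyAdapted U.𝓕 (U.minorityProcess c) := fun _ ↦
  (U.measurable_comp_counts le_rfl (minorityFraction · c)).stronglyMeasurable

lemma integrable_minorityProcess (c : Fin q) (n : ℕ) :
    Integrable (U.minorityProcess c n) U.μ :=
  .of_bound (((U.stronglyAdapted_minorityProcess c n).mono (U.𝓕.le n)).aestronglyMeasurable) 1
    (ae_of_all _ fun ω ↦ abs_minorityFraction_le_one (U.counts_nonneg n ω))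

lemma condExp_minorityProcess_succ (c : Fin q) (n : ℕ) :
    U.μ[U.minorityProcess c (n+1) | U.𝓕 n] =ᵐ[U.μ] fun ω ↦
      ∑ i, minorityFraction (U.counts n ω + Pi.single i (U.m i : ℝ)) c *
        (U.counts n ω i / ∑ j, U.counts n ω j) := by
  let g (i : Fin q) (ω : Ω) : ℝ := minorityFraction (U.counts n ω + Pi.single i (U.m i : ℝ)) c
  have hg (i : Fin q) : StronglyMeasurable[U.𝓕 n] (g i) := by
    have := U.measurable_comp_counts (n := n) (N := n) le_rfl
      fun x ↦ minorityFraction (x + Pi.single i (U.m i : ℝ)) c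
    exact this.stronglyMeasurable
  have hD (i : Fin q) : Integrable (U.drawn n i) U.μ :=
    .of_bound (U.measurable_drawn n i).aestronglyMeasurable 1
      (ae_of_all _ (U.abs_drawn_le_one n i))
  have hgD (i : Fin q) : Integrable (g i * U.drawn n i) U.μ := by
    refine .of_bound (((hg i).mono (U.𝓕.le n)).aestronglyMeasurable.mul
      (hD i).aestronglyMeasurable) 1 (ae_of_all _ fun ω ↦ ?_)
    rw [Real.norm_eq_abs, Pi.mul_apply, abs_mul]
    exact mul_le_one₀ (abs_minorityFraction_le_one (add_nonneg (U.counts_nonneg n ω)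
      (Pi.single_nonneg.2 (Nat.cast_nonneg _)))) (abs_nonneg _) (U.abs_drawn_le_one n i ω)
  have hY : U.minorityProcess c (n+1) = ∑ i, g i * U.drawn n i := by
    ext ω
    simp only [U.minorityProcess_succ, Finset.sum_apply, Pi.mul_apply, g]
  have hpull (i : Fin q) : U.μ[g i * U.drawn n i | U.𝓕 n] =ᵐ[U.μ]
      g i * fun ω ↦ U.counts n ω i / ∑ j, U.counts n ω j :=
    (condExp_mul_of_stronglyMeasurable_left (hg i) (hgD i) (hD i)).trans
      (Filter.EventuallyEq.mul (Filter.EventuallyEq.refl _ _) (U.hcond n i))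
  rw [hY]
  filter_upwards [condExp_finsetSum (s := Finset.univ) (fun i _ ↦ hgD i) (U.𝓕 n),
    ae_all_iff.2 hpull] with ω hsum hω
  rw [hsum, Finset.sum_apply]
  exact Finset.sum_congr rfl fun i _ ↦ hω i

theorem supermartingale_minorityProcess {c : Fin q} (hm : ∀ j, U.m j ≤ U.m c) :
    Supermartingale (U.minorityProcess c) U.𝓕 U.μ := by
  refine supermartingale_nat (U.stronglyAdapted_minorityProcess c)
    (U.integrable_minorityProcess c) fun n ↦ ?_
  filter_upwards [U.condExp_minorityProcess_succ c n] with ω hω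
  rw [hω]
  exact sum_minorityFraction_add_single_mul_le (U.counts_nonneg n ω) (fun _ ↦ Nat.cast_nonneg _)
    fun i ↦ by exact_mod_cast hm i

end PolyaUrnQ

theorem stmt13_general {q : ℕ} {Ω : Type*} [MeasurableSpace Ω] (U : PolyaUrnQ q Ω)
    (c : Fin q) (hm : ∀ j, U.m j ≤ U.m c)
    (hmaj : ∀ ω, (∑ j ∈ Finset.univ.erase c, U.X 0 j ω) < U.X 0 c ω) :
    0 < U.μ {ω | ∀ n, (∑ j ∈ Finset.univ.erase c, U.X n j ω) < U.X n c ω} := by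
  have hlt_iff (n : ℕ) (ω : Ω) : U.minorityProcess c n ω < 1 / 2 ↔
      (∑ j ∈ Finset.univ.erase c, U.X n j ω) < U.X n c ω := by
    have hc : (0 : ℝ) < U.counts n ω c :=
      Nat.cast_pos.2 ((Nat.zero_le _).trans_lt ((hmaj ω).trans_le (U.X_zero_le n c ω)))
    rw [PolyaUrnQ.minorityProcess, minorityFraction_lt_half_iff (U.counts_nonneg n ω) hc]
    simp only [PolyaUrnQ.counts]
    norm_cast
  have hY₀ : U.μ[U.minorityProcess c 0] < 1 / 2 :=
    integral_lt_of_forall_lt (U.integrable_minorityProcess c 0) fun ω ↦ (hlt_iff 0 ω).2 (hmaj ω)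
  have hpos := (U.supermartingale_minorityProcess hm).measure_forall_lt_pos
    (fun n ω ↦ minorityFraction_nonneg (U.counts_nonneg n ω)) hY₀
  simpa only [hlt_iff] using hpos

/-- In the `q`-colour unfair Pólya urn where colour `c` satisfies `m c ≥ m j` for all `j`,
if initially colour `c` holds an absolute majority (more balls than all the other colours
combined), then with positive probability colour `c` holds an absolute majority at every
time `n ≥ 0`. -/
theorem stmt13 {q : ℕ} {Ω : Type*} [MeasurableSpace Ω] (U : PolyaUrnQ q Ω)
    (hq : 2 ≤ q) (c : Fin q) (hm : ∀ j, U.m j ≤ U.m c)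
    (hinit : ∀ j ω, 1 ≤ U.X 0 j ω)
    (hmaj : ∀ ω, (∑ j ∈ Finset.univ.erase c, U.X 0 j ω) < U.X 0 c ω) :
    0 < U.μ {ω | ∀ n, (∑ j ∈ Finset.univ.erase c, U.X n j ω) < U.X n c ω} :=
  stmt13_general U c hm hmaj
end
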